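/- The antipode S of the quasi-shuffle Hopf algebra also satisfies S(a₁a₂⋯aₙ) = (-1)ⁿ Σ_{I∈C(n)} I[aₙa_{n-1}⋯a₁], i.e. it equals (-1)ⁿ times the sum over all compositions I of n of the block-contractions of the reversed word. -/

import Mathlib

open Finsupp Classical

noncomputable section

variable {A : Type} 

/-- The word `w` as a basis element of the free module `k⟨A⟩`. -/
def sing (k : Type) [Field k] (w : List A) : List A →₀ k := Finsupp.single w 1

/-- Left multiplication of a linear combination of words by a letter. -/
def consF (k : Type) [Field k] (a : A) (f : List A →₀ k) : List A →₀ k :=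
  f.mapDomain (List.cons a)

/-- Left multiplication by an element of `A ∪ {0}` (with `none` playing the role of `0`). -/
def oconsF (k : Type) [Field k] : Option A → (List A →₀ k) → (List A →₀ k)
  | none, _ => 0
  | Option.some a, f => consF k a f

/-- The quasi-shuffle product of two words, with structure operation `br : A → A → Option A`
(`none` = 0):  `1*w = w*1 = w` and
`aw₁ * bw₂ = a(w₁*bw₂) + b(aw₁*w₂) + [a,b](w₁*w₂)`. -/
def qsh (k : Type) [Field k] (br : A → A → Option A) : List A → List A → (List A →₀ k)
  | [], w => sing k w
  | a :: u, [] => sing k (a :: u)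
  | a :: u, b :: v =>
      consF k a (qsh k br u (b :: v)) + consF k b (qsh k br (a :: u) v)
        + oconsF k (br a b) (qsh k br u v)
  termination_by w1 w2 => w1.length + w2.length

/-- Linear extension of a map defined on words. -/
def liftOne (k : Type) [Field k] {α β : Type} (f : α → (β →₀ k)) : (α →₀ k) → (β →₀ k) :=
  fun x => x.sum fun u c => c • f u

/-- Bilinear extension of a product defined on words. -/
def liftTwo (k : Type) [Field k] {α β : Type} (f : α → α → (β →₀ k)) :
    (α →₀ k) → (α →₀ k) → (β →₀ k) :=
  fun x y => x.sum fun u cu => y.sum fun v cv => (cu * cv) • f u v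

/-- The degree of a word: the sum of the degrees of its letters. -/
def degW (deg : A → ℕ) (w : List A) : ℕ := (w.map deg).sum

/-- The iterated bracket `[S]` of a nonempty sequence of letters (`none` = 0). -/
def brS (br : A → A → Option A) : List A → Option A
  | [] => none
  | [a] => some a
  | a :: b :: w => (brS br (b :: w)).bind (br a)

/-- The contraction `I[w]` of the word `w` along the composition with list of parts `I`:
consecutive blocks of `w` of lengths given by `I` are contracted via the iterated bracket;
the result is `0` if some bracket vanishes. -/
def contract (k : Type) [Field k] (br : A → A → Option A) : List ℕ → List A → (List A →₀ k)
  | [], w => (match w with | [] => sing k [] | _ => 0)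
  | i :: I, w => oconsF k (brS br (w.take i)) (contract k br I (w.drop i))

end
noncomputable section AuxProof

open Finsupp Classical

variable {A : Type} (k : Type) [Field k] (br : A → A → Option A)

/-! ### Basic linearity lemmas -/

lemma consF_zero (a : A) : consF k a (0 : List A →₀ k) = 0 :=
  Finsupp.mapDomain_zero

lemma consF_add (a : A) (x y : List A →₀ k) :
    consF k a (x + y) = consF k a x + consF k a y :=
  Finsupp.mapDomain_add

lemma consF_smul (a : A) (c : k) (x : List A →₀ k) :
    consF k a (c • x) = c • consF k a x :=
  Finsupp.mapDomain_smul c x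

lemma consF_sing (a : A) (u : List A) : consF k a (sing k u) = sing k (a :: u) :=
  Finsupp.mapDomain_single

lemma consF_sum {ι : Type} (a : A) (s : Finset ι) (f : ι → (List A →₀ k)) :
    consF k a (∑ j ∈ s, f j) = ∑ j ∈ s, consF k a (f j) :=
  Finsupp.mapDomain_finset_sum

lemma oconsF_zero (e : Option A) : oconsF k e (0 : List A →₀ k) = 0 := by
  cases e <;> simp [oconsF, consF_zero]

lemma oconsF_add (e : Option A) (x y : List A →₀ k) :
    oconsF k e (x + y) = oconsF k e x + oconsF k e y := by
  cases e <;> simp [oconsF, consF_add]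

lemma oconsF_smul (e : Option A) (c : k) (x : List A →₀ k) :
    oconsF k e (c • x) = c • oconsF k e x := by
  cases e <;> simp [oconsF, consF_smul]

lemma oconsF_sum {ι : Type} (e : Option A) (s : Finset ι) (f : ι → (List A →₀ k)) :
    oconsF k e (∑ j ∈ s, f j) = ∑ j ∈ s, oconsF k e (f j) := by
  cases e <;> simp [oconsF, consF_sum]

/-! ### qsh equation lemmas -/

lemma qsh_nil_left (v : List A) : qsh k br [] v = sing k v := by
  simp [qsh]

lemma qsh_nil_right (u : List A) : qsh k br u [] = sing k u := by
  cases u <;> simp [qsh]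

lemma qsh_cons_cons (a : A) (u : List A) (b : A) (v : List A) :
    qsh k br (a :: u) (b :: v) =
      consF k a (qsh k br u (b :: v)) + consF k b (qsh k br (a :: u) v)
        + oconsF k (br a b) (qsh k br u v) := by
  rw [qsh]

/-! ### The lifted product -/

/-- `qshL v` is the linear extension of `u ↦ qsh u v`. -/
def qshL (v : List A) : (List A →₀ k) →ₗ[k] (List A →₀ k) :=
  Finsupp.lsum k fun u => LinearMap.toSpanSingleton k _ (qsh k br u v)

lemma qshL_apply (v : List A) (x : List A →₀ k) :
    qshL k br v x = x.sum fun u c => c • qsh k br u v := by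
  rw [qshL, Finsupp.lsum_apply]
  rfl

lemma qshL_sing (v u : List A) : qshL k br v (sing k u) = qsh k br u v := by
  rw [qshL_apply, sing, Finsupp.sum_single_index] <;> simp

lemma liftTwo_sing_right (x : List A →₀ k) (v : List A) :
    liftTwo k (qsh k br) x (sing k v) = qshL k br v x := by
  rw [liftTwo, qshL_apply]
  refine Finsupp.sum_congr fun u _ => ?_
  rw [sing, Finsupp.sum_single_index] <;> simp

lemma qshL_nil (x : List A →₀ k) : qshL k br [] x = x := by
  rw [qshL_apply]
  conv_rhs => rw [← Finsupp.sum_single x]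
  refine Finsupp.sum_congr fun u _ => ?_
  rw [qsh_nil_right, sing, Finsupp.smul_single, smul_eq_mul, mul_one]

lemma qshL_consF_cons (a : A) (x : List A →₀ k) (b : A) (s : List A) :
    qshL k br (b :: s) (consF k a x) =
      consF k a (qshL k br (b :: s) x) + consF k b (qshL k br s (consF k a x))
        + oconsF k (br a b) (qshL k br s x) := by
  induction x using Finsupp.induction_linear with
  | zero => simp [consF_zero, oconsF_zero]
  | add f g hf hg =>
      simp only [consF_add, oconsF_add, map_add, hf, hg]
      abel
  | single u c =>
      have hsc : (Finsupp.single u c : List A →₀ k) = c • sing k u := by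
        simp [sing, Finsupp.smul_single]
      simp only [hsc, consF_smul, map_smul, oconsF_smul, consF_sing, qshL_sing,
        qsh_cons_cons, smul_add]

lemma qshL_oconsF_cons (e : Option A) (x : List A →₀ k) (b : A) (s : List A) :
    qshL k br (b :: s) (oconsF k e x) =
      oconsF k e (qshL k br (b :: s) x) + consF k b (qshL k br s (oconsF k e x))
        + oconsF k (e.bind fun a => br a b) (qshL k br s x) := by
  cases e with
  | none => simp [oconsF, consF_zero]
  | some a => exact qshL_consF_cons k br a x b s

/-! ### The explicit antipode formula as a recursively defined function -/

/-- `CT u = Σ_{I ⊨ |u|} I[u]`, defined by recursion on the first block. -/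
def CT : List A → (List A →₀ k)
  | [] => sing k []
  | a :: u => ∑ j ∈ Finset.range (u.length + 1),
      oconsF k (brS br (a :: u.take j)) (CT (u.drop j))
  termination_by w => w.length
  decreasing_by simp

lemma CT_nil : CT k br ([] : List A) = sing k [] := by rw [CT]

lemma CT_cons (a : A) (u : List A) :
    CT k br (a :: u) = ∑ j ∈ Finset.range (u.length + 1),
      oconsF k (brS br (a :: u.take j)) (CT k br (u.drop j)) := by
  rw [CT]

/-- The auxiliary partial-telescope function. -/
def Haux (r s : List A) : List A →₀ k :=
  ∑ j ∈ Finset.range r.length,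
    oconsF k (brS br (r.take (j + 1))) (qshL k br s (CT k br (r.drop (j + 1))))

lemma Haux_nil_left (s : List A) : Haux k br [] s = 0 := by
  simp [Haux]

lemma Haux_nil_right (r : List A) (hr : r ≠ []) : Haux k br r [] = CT k br r := by
  cases r with
  | nil => exact absurd rfl hr
  | cons c r' =>
      rw [Haux, CT_cons]
      simp [qshL_nil]

lemma key (hcomm : ∀ a b, br a b = br b a) (r : List A) (b : A) (s : List A) :
    qshL k br (b :: s) (CT k br r) = Haux k br r (b :: s) + Haux k br (b :: r) s := by
  cases r with
  | nil =>
      rw [CT_nil, qshL_sing, qsh_nil_left, Haux_nil_left, Haux, zero_add]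
      simp [brS, oconsF, CT_nil, qshL_sing, qsh_nil_left, consF_sing]
  | cons c r' =>
      rw [CT_cons, map_sum]
      have hterm : ∀ j ∈ Finset.range (r'.length + 1),
          qshL k br (b :: s) (oconsF k (brS br (c :: r'.take j)) (CT k br (r'.drop j))) =
            oconsF k (brS br (c :: r'.take j)) (qshL k br (b :: s) (CT k br (r'.drop j)))
              + consF k b (qshL k br s (oconsF k (brS br (c :: r'.take j)) (CT k br (r'.drop j))))
              + oconsF k ((brS br (c :: r'.take j)).bind fun a => br a b)
                  (qshL k br s (CT k br (r'.drop j))) :=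
        fun j _ => qshL_oconsF_cons k br _ _ b s
      rw [Finset.sum_congr rfl hterm, Finset.sum_add_distrib, Finset.sum_add_distrib]
      have hA : Haux k br (c :: r') (b :: s) = ∑ j ∈ Finset.range (r'.length + 1),
          oconsF k (brS br (c :: r'.take j)) (qshL k br (b :: s) (CT k br (r'.drop j))) := by
        rw [Haux]
        simp [List.take_succ_cons, List.drop_succ_cons]
      have hBC : Haux k br (b :: c :: r') s =
          (∑ j ∈ Finset.range (r'.length + 1),
            oconsF k ((brS br (c :: r'.take j)).bind fun a => br a b)
              (qshL k br s (CT k br (r'.drop j))))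
          + ∑ j ∈ Finset.range (r'.length + 1),
            consF k b (qshL k br s (oconsF k (brS br (c :: r'.take j)) (CT k br (r'.drop j)))) := by
        rw [Haux]
        have hlen : (b :: c :: r').length = (r'.length + 1) + 1 := by simp
        rw [hlen, Finset.sum_range_succ']
        congr 1
        · refine Finset.sum_congr rfl fun j _ => ?_
          have ht : (b :: c :: r').take (j + 1 + 1) = b :: c :: r'.take j := by simp
          have hd : (b :: c :: r').drop (j + 1 + 1) = r'.drop j := by simp
          rw [ht, hd]
          have hbr : brS br (b :: c :: r'.take j) =
              (brS br (c :: r'.take j)).bind fun a => br a b := by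
            rw [brS]
            cases brS br (c :: r'.take j) <;> simp [hcomm]
          rw [hbr]
        · have ht : (b :: c :: r').take (0 + 1) = [b] := by simp
          have hd : (b :: c :: r').drop (0 + 1) = c :: r' := by simp
          rw [ht, hd]
          have hb1 : brS br [b] = some b := by rw [brS]
          rw [hb1]
          show consF k b (qshL k br s (CT k br (c :: r'))) = _
          rw [CT_cons, map_sum, consF_sum]
      rw [hA, hBC]
      abel

/-! ### Composition sums -/

lemma comp_ext {n : ℕ} (I J : Composition n) (h : I.blocks = J.blocks) : I = J := by
  cases I; cases J; simpa using h

lemma comp_zero_sum {M : Type} [AddCommMonoid M] (f : List ℕ → M) :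
    (∑ I : Composition 0, f I.blocks) = f [] := by
  have h1 : ∀ I : Composition 0, I.blocks = [] := by
    intro I
    cases hb : I.blocks with
    | nil => rfl
    | cons x t =>
        have hx : 0 < x := I.blocks_pos (hb ▸ List.mem_cons_self (a := x) (l := t))
        have hs := I.blocks_sum
        rw [hb] at hs
        simp at hs
        omega
  rw [Finset.sum_congr rfl fun I _ => by rw [h1 I]]
  rw [Finset.sum_const, Finset.card_univ, composition_card]
  simp

lemma comp_sum_split {M : Type} [AddCommMonoid M] (n : ℕ) (f : List ℕ → M) :
    (∑ I : Composition (n + 1), f I.blocks)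
      = ∑ j ∈ Finset.range (n + 1), ∑ J : Composition (n - j), f ((j + 1) :: J.blocks) := by
  classical
  have hblocks : ∀ I : Composition (n + 1), ∃ h t, I.blocks = h :: t ∧ 0 < h := by
    intro I
    cases hb : I.blocks with
    | nil =>
        have hs := I.blocks_sum
        rw [hb] at hs
        simp at hs
    | cons h t =>
        exact ⟨h, t, rfl, I.blocks_pos (hb ▸ List.mem_cons_self (a := h) (l := t))⟩
  set g : Composition (n + 1) → ℕ := fun I => I.blocks.headI - 1 with hg
  have hmaps : ∀ I : Composition (n + 1), I ∈ Finset.univ → g I ∈ Finset.range (n + 1) := by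
    intro I _
    obtain ⟨h, t, hb, hpos⟩ := hblocks I
    have hs := I.blocks_sum
    rw [hb] at hs
    simp only [List.sum_cons] at hs
    simp only [hg, hb, List.headI, Finset.mem_range]
    omega
  rw [← Finset.sum_fiberwise_of_maps_to hmaps fun I => f I.blocks]
  refine Finset.sum_congr rfl fun j hj => ?_
  have hjn : j ≤ n := by simpa using Nat.lt_succ_iff.mp (Finset.mem_range.mp hj)
  refine Finset.sum_bij' (i := fun I hI => (⟨I.blocks.tail,
      fun hx => I.blocks_pos (List.mem_of_mem_tail hx), ?_⟩ : Composition (n - j)))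
    (j := fun J _ => (⟨(j + 1) :: J.blocks,
      fun hx => ?_, ?_⟩ : Composition (n + 1))) ?_ ?_ ?_ ?_ ?_
  · obtain ⟨h, t, hb, hpos⟩ := hblocks I
    have hs := I.blocks_sum
    rw [hb] at hs
    simp only [List.sum_cons] at hs
    have hhead : h - 1 = j := by
      have := (Finset.mem_filter.mp hI).2
      simpa [hg, hb, List.headI] using this
    rw [hb]
    simp only [List.tail_cons]
    omega
  · rcases List.mem_cons.mp hx with h | h
    · omega
    · exact J.blocks_pos h
  · have := J.blocks_sum
    simp only [List.sum_cons, this]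
    omega
  · intro I hI
    simp
  · intro J hJ
    simp only [Finset.mem_filter, Finset.mem_univ, true_and, hg, List.headI]
    omega
  · intro I hI
    apply comp_ext
    obtain ⟨h, t, hb, hpos⟩ := hblocks I
    have hhead : h - 1 = j := by
      have := (Finset.mem_filter.mp hI).2
      simpa [hg, hb, List.headI] using this
    simp only [hb, List.tail_cons]
    congr 1
    omega
  · intro J hJ
    apply comp_ext
    simp
  · intro I hI
    obtain ⟨h, t, hb, hpos⟩ := hblocks I
    have hhead : h - 1 = j := by
      have := (Finset.mem_filter.mp hI).2
      simpa [hg, hb, List.headI] using this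
    simp only [hb, List.tail_cons]
    congr 2
    omega

lemma CT_eq : ∀ (n : ℕ) (u : List A), u.length ≤ n →
    (∑ I : Composition u.length, contract k br I.blocks u) = CT k br u := by
  intro n
  induction n with
  | zero =>
      intro u hu
      have : u = [] := List.eq_nil_of_length_eq_zero (Nat.le_zero.mp hu)
      subst this
      rw [CT_nil]
      exact comp_zero_sum (fun l => contract k br l [])
  | succ n ih =>
      intro u hu
      cases u with
      | nil =>
          rw [CT_nil]
          exact comp_zero_sum (fun l => contract k br l [])
      | cons a u' =>
          rw [CT_cons]
          calc (∑ I : Composition (a :: u').length, contract k br I.blocks (a :: u'))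
              = ∑ j ∈ Finset.range (u'.length + 1), ∑ J : Composition (u'.length - j),
                  contract k br ((j + 1) :: J.blocks) (a :: u') :=
                comp_sum_split u'.length (fun l => contract k br l (a :: u'))
            _ = _ := by
                refine Finset.sum_congr rfl fun j hj => ?_
                have hc : ∀ J : Composition (u'.length - j),
                    contract k br ((j + 1) :: J.blocks) (a :: u') =
                      oconsF k (brS br (a :: u'.take j)) (contract k br J.blocks (u'.drop j)) := by
                  intro J
                  rw [contract]
                  simp
                rw [Finset.sum_congr rfl fun J _ => hc J, ← oconsF_sum]
                congr 1
                have hdl : (u'.drop j).length = u'.length - j := by simp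
                have := ih (u'.drop j) (by simp only [List.length_drop]; simp only [List.length_cons] at hu; omega)
                rw [hdl] at this
                exact this
end AuxProof
noncomputable section MainProof

open Finsupp Classical

variable {A : Type} (k : Type) [Field k] (br : A → A → Option A)

lemma Pm (hcomm : ∀ a b, br a b = br b a) (w : List A) :
    ∀ m, m < w.length →
      (∑ i ∈ Finset.range (m + 1),
        qshL k br (w.drop i) (((-1 : k) ^ i) • CT k br ((w.take i).reverse)))
      = ((-1 : k) ^ m) • Haux k br ((w.take (m + 1)).reverse) (w.drop (m + 1)) := by
  intro m
  induction m with
  | zero =>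
      intro hm
      cases w with
      | nil => simp at hm
      | cons b s =>
          rw [Finset.sum_range_one]
          simp only [List.take_zero, List.reverse_nil, List.drop_zero, pow_zero, one_smul]
          rw [key k br hcomm [] b s, Haux_nil_left, zero_add]
          simp
  | succ m ih =>
      intro hm
      have hm' : m < w.length := by omega
      rw [Finset.sum_range_succ, ih hm']
      have hd : w.drop (m + 1) = w[m + 1] :: w.drop (m + 2) := List.drop_eq_getElem_cons hm
      have ht : (w.take (m + 2)).reverse = w[m + 1] :: (w.take (m + 1)).reverse := by
        rw [List.take_succ]
        have : w[m + 1]? = some w[m + 1] := List.getElem?_eq_getElem hm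
        rw [this]
        simp
      rw [map_smul, hd, key k br hcomm _ _ _, ht, ← hd]
      have hsign : (-1 : k) ^ (m + 1) = -((-1 : k) ^ m) := by ring
      rw [hsign]
      module

/-- The antipode `S` of the quasi-shuffle Hopf algebra, determined
recursively by `S(1) = 1` and `S(w) = -Σ_{k=0}^{n-1} S(a₁⋯a_k) * a_{k+1}⋯aₙ`, satisfies
`S(a₁⋯aₙ) = (-1)ⁿ Σ_{I∈C(n)} I[aₙ⋯a₁]`. -/
theorem antipode_second_formula {A k : Type} [Field k] [CharZero k]
    (deg : A → ℕ) (hpos : ∀ a, 0 < deg a)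
    (br : A → A → Option A)
    (hcomm : ∀ a b, br a b = br b a)
    (hassoc : ∀ a b c, (br a b).bind (fun x => br x c) = (br b c).bind (br a))
    (hdeg : ∀ a b c, br a b = some c → deg c = deg a + deg b)
    (S : List A → (List A →₀ k))
    (hS1 : S [] = sing k [])
    (hSrec : ∀ w : List A, w ≠ [] →
      S w = - ∑ i ∈ Finset.range w.length,
        liftTwo k (qsh k br) (S (w.take i)) (sing k (w.drop i))) :
    ∀ w : List A,
      S w = ((-1 : k) ^ w.length) •
        ∑ I : Composition w.length, contract k br I.blocks w.reverse := by
  have main : ∀ (n : ℕ) (w : List A), w.length ≤ n →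
      S w = ((-1 : k) ^ w.length) • CT k br w.reverse := by
    intro n
    induction n with
    | zero =>
        intro w hw
        have : w = [] := List.eq_nil_of_length_eq_zero (Nat.le_zero.mp hw)
        subst this
        simp [hS1, CT_nil]
    | succ n ih =>
        intro w hw
        by_cases hwe : w = []
        · subst hwe; simp [hS1, CT_nil]
        · rw [hSrec w hwe]
          have hterm : ∀ i ∈ Finset.range w.length,
              liftTwo k (qsh k br) (S (w.take i)) (sing k (w.drop i)) =
                qshL k br (w.drop i) (((-1 : k) ^ i) • CT k br ((w.take i).reverse)) := by
            intro i hi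
            have hi' : i < w.length := Finset.mem_range.mp hi
            have hlen : (w.take i).length = i := by
              simp only [List.length_take]
              omega
            rw [ih (w.take i) (by rw [hlen]; omega), hlen, liftTwo_sing_right]
          rw [Finset.sum_congr rfl hterm]
          obtain ⟨m, hm⟩ : ∃ m, w.length = m + 1 := by
            have := List.length_pos_iff.mpr hwe
            exact ⟨w.length - 1, by omega⟩
          rw [hm, Pm k br hcomm w m (by omega)]
          have h1 : w.take (m + 1) = w := by rw [← hm]; simp
          have h2 : w.drop (m + 1) = [] := by rw [← hm]; simp
          rw [h1, h2, Haux_nil_right k br _ (by simpa using hwe), ← neg_smul]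
          congr 1
          ring
  intro w
  rw [main w.length w le_rfl]
  have hrl : w.length = w.reverse.length := (List.length_reverse (as := w)).symm
  rw [hrl, CT_eq k br w.reverse.length w.reverse le_rfl]

end MainProof
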